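/- arXiv:2503.11382 — 2 statements merged into one kernel-verified Lean document; each statement's English description precedes it below -/
import Mathlib

section
/- The vector v of diagonal imaginary parts, v_x := Im M_{xx}, satisfies v = M⁰·(t·S·v + η·𝟙) entrywise, i.e., Im M_{xx} = ∑_a |M_{xa}|²·(η + t·∑_b S_{ab}·Im M_{bb}) for every x. Consequently, if I - t·M⁰·S is invertible, then Im M_{xx} = η·((I - t·M⁰·S)^{-1}·M⁰·𝟙)_x for every x. -/
open Matrix

/-- The vector of diagonal imaginary parts `v_x = Im M_{xx}` of the solution
`M = (Λ - z - t·diag(S·diag M))⁻¹` satisfies `v = M⁰·(t·S·v + η·𝟙)` entrywise,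
and hence `v = η·(I - t·M⁰·S)⁻¹·M⁰·𝟙` whenever `I - t·M⁰·S` is invertible,
where `M⁰_{ab} = |M_{ab}|²`. -/
theorem imaginary_part_self_consistent (N : ℕ)
    (Λ M : Matrix (Fin N) (Fin N) ℂ) (hΛ : Λ.IsHermitian)
    (S : Matrix (Fin N) (Fin N) ℝ) (hS : S.IsSymm)
    (t E η : ℝ) (hη : 0 < η)
    (hUnit : IsUnit (Λ - ((E : ℂ) + (η : ℂ) * Complex.I) • 1 -
      (t : ℂ) • Matrix.diagonal (fun a => ∑ b, (S a b : ℂ) * M b b)))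
    (hM : M = (Λ - ((E : ℂ) + (η : ℂ) * Complex.I) • 1 -
      (t : ℂ) • Matrix.diagonal (fun a => ∑ b, (S a b : ℂ) * M b b))⁻¹) :
    (∀ x, (M x x).im
        = ∑ a, Complex.normSq (M x a) * (η + t * ∑ b, S a b * (M b b).im)) ∧
    (IsUnit ((1 : Matrix (Fin N) (Fin N) ℝ)
        - t • (Matrix.of fun p q => Complex.normSq (M p q)) * S) →
      ∀ x, (M x x).im
        = η * Matrix.mulVec
            ((((1 : Matrix (Fin N) (Fin N) ℝ)
                - t • (Matrix.of fun p q => Complex.normSq (M p q)) * S)⁻¹) *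
              (Matrix.of fun p q => Complex.normSq (M p q)))
            (fun _ => (1 : ℝ)) x) := by
  classical
  set z : ℂ := (E : ℂ) + (η : ℂ) * Complex.I with hz
  set f : Fin N → ℂ := fun a => ∑ b, (S a b : ℂ) * M b b with hf
  set A : Matrix (Fin N) (Fin N) ℂ := Λ - z • 1 - (t : ℂ) • Matrix.diagonal f with hA
  have hdet : IsUnit A.det := (Matrix.isUnit_iff_isUnit_det A).mp hUnit
  have hMA : M * A = 1 := by rw [hM]; exact Matrix.nonsing_inv_mul A hdet
  have hAM : A * M = 1 := by rw [hM]; exact Matrix.mul_nonsing_inv A hdet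
  -- the diagonal difference
  set g : Fin N → ℝ := fun a => ∑ b, S a b * (M b b).im with hg
  have hAH : Aᴴ = Λ - (starRingEnd ℂ z) • 1 -
      (t : ℂ) • Matrix.diagonal (fun a => (starRingEnd ℂ) (f a)) := by
    rw [hA]
    simp [Matrix.conjTranspose_sub, Matrix.conjTranspose_smul, hΛ.eq,
      Matrix.diagonal_conjTranspose, Complex.star_def, Function.comp]
    rfl
  have hdiff : Aᴴ - A = Matrix.diagonal
      (fun a => (2 * Complex.I) * ((η : ℂ) + (t : ℂ) * (g a : ℂ))) := by
    rw [hAH, hA]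
    ext i j
    by_cases hij : i = j
    · subst hij
      simp only [Matrix.sub_apply, Matrix.smul_apply, Matrix.one_apply_eq,
        Matrix.diagonal_apply_eq, smul_eq_mul]
      have h1 : z - starRingEnd ℂ z = 2 * (η : ℂ) * Complex.I := by
        rw [Complex.sub_conj]
        norm_num [hz]
      have h2 : f i - starRingEnd ℂ (f i) = 2 * (g i : ℂ) * Complex.I := by
        rw [Complex.sub_conj]
        congr 2
        push_cast [hf, hg]
        norm_num [Complex.im_sum]
      have : (Λ i i - starRingEnd ℂ z * 1 - (t : ℂ) * starRingEnd ℂ (f i)) -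
          (Λ i i - z * 1 - (t : ℂ) * f i)
          = (z - starRingEnd ℂ z) + (t : ℂ) * (f i - starRingEnd ℂ (f i)) := by ring
      rw [this, h1, h2]; ring
    · simp [Matrix.one_apply_ne hij, Matrix.diagonal_apply_ne _ hij]
  have key : M - Mᴴ = M * (Aᴴ - A) * Mᴴ := by
    have h1 : Aᴴ * Mᴴ = 1 := by rw [← Matrix.conjTranspose_mul, hMA, Matrix.conjTranspose_one]
    calc M - Mᴴ = M * (Aᴴ * Mᴴ) - (M * A) * Mᴴ := by rw [h1, hMA, mul_one, one_mul]
      _ = M * (Aᴴ - A) * Mᴴ := by noncomm_ring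
  have part1 : ∀ x, (M x x).im
      = ∑ a, Complex.normSq (M x a) * (η + t * ∑ b, S a b * (M b b).im) := by
    intro x
    have hx := congrFun (congrFun key x) x
    rw [hdiff] at hx
    have hL : (M - Mᴴ) x x = 2 * ((M x x).im : ℂ) * Complex.I := by
      simp [Matrix.sub_apply, Matrix.conjTranspose_apply, Complex.star_def,
        Complex.sub_conj]
    have hR : (M * Matrix.diagonal
          (fun a => (2 * Complex.I) * ((η : ℂ) + (t : ℂ) * (g a : ℂ))) * Mᴴ) x x
        = 2 * Complex.I * ∑ a, (Complex.normSq (M x a) : ℂ) *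
            ((η : ℂ) + (t : ℂ) * (g a : ℂ)) := by
      rw [Matrix.mul_apply, Finset.mul_sum]
      congr 1
      ext a
      rw [Matrix.mul_diagonal, Matrix.conjTranspose_apply]
      have : M x a * star (M x a) = (Complex.normSq (M x a) : ℂ) := Complex.mul_conj _
      calc M x a * (2 * Complex.I * ((η : ℂ) + (t : ℂ) * (g a : ℂ))) * star (M x a)
          = (M x a * star (M x a)) * (2 * Complex.I * ((η : ℂ) + (t : ℂ) * (g a : ℂ))) := by
            ring
        _ = 2 * Complex.I * ((Complex.normSq (M x a) : ℂ) * ((η : ℂ) + (t : ℂ) * (g a : ℂ))) := by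
            rw [this]; ring
    rw [hL, hR] at hx
    have h2I : (2 : ℂ) * Complex.I ≠ 0 := by
      simp [Complex.I_ne_zero]
    have hx' : ((M x x).im : ℂ)
        = ∑ a, (Complex.normSq (M x a) : ℂ) * ((η : ℂ) + (t : ℂ) * (g a : ℂ)) := by
      apply mul_left_cancel₀ h2I
      rw [← hx]; ring
    have := congrArg Complex.re hx'
    simpa [Complex.re_sum, hg] using this
  refine ⟨part1, ?_⟩
  intro hB x
  set M0 : Matrix (Fin N) (Fin N) ℝ := Matrix.of fun p q => Complex.normSq (M p q) with hM0
  set v : Fin N → ℝ := fun b => (M b b).im with hv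
  set B : Matrix (Fin N) (Fin N) ℝ := 1 - t • M0 * S with hBdef
  have hBdet : IsUnit B.det := (Matrix.isUnit_iff_isUnit_det B).mp hB
  have hvec : B.mulVec v = η • M0.mulVec (fun _ => (1 : ℝ)) := by
    ext y
    have h1 := part1 y
    simp only [Matrix.sub_mulVec, Matrix.one_mulVec, Matrix.smul_mulVec,
      Pi.sub_apply, Pi.smul_apply, smul_eq_mul, hBdef, Matrix.smul_mul]
    rw [← Matrix.mulVec_mulVec]
    simp only [Matrix.mulVec, dotProduct, hM0, Matrix.of_apply, mul_one]
    rw [show v y = (M y y).im from rfl, h1]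
    simp only [hv]
    rw [Finset.mul_sum, Finset.mul_sum, ← Finset.sum_sub_distrib]
    apply Finset.sum_congr rfl
    intro a _
    ring
  have hveq : v = η • (B⁻¹ * M0).mulVec (fun _ => (1 : ℝ)) := by
    have : B⁻¹.mulVec (B.mulVec v) = v := by
      rw [Matrix.mulVec_mulVec, Matrix.nonsing_inv_mul B hBdet, Matrix.one_mulVec]
    rw [← this, hvec]
    rw [Matrix.mulVec_smul, Matrix.mulVec_mulVec]
  have := congrFun hveq x
  simpa [hv] using this
end

section
/- Under the assumption that I - t·(M⁰)ᵀ·S is invertible, for all indices x, y: ∑_{a,b} ((I - t·(M⁰)ᵀ·S)^{-1})_{ab} · M_{xb} · conj(M_{yb}) = (Im M)_{xy} / η, where (Im M)_{xy} := ((M - M^*)/(2i))_{xy}. -/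
open Matrix

private lemma isUnit_one_sub_swap {R : Type*} [Ring R] {x y : R}
    (h : IsUnit (1 - x * y)) : IsUnit (1 - y * x) := by
  refine ⟨⟨1 - y * x, 1 + y * h.unit.inv * x, ?_, ?_⟩, rfl⟩
  · calc
      (1 - y * x) * (1 + y * (IsUnit.unit h).inv * x) =
          1 - y * x + y * ((1 - x * y) * h.unit.inv) * x := by noncomm_ring
      _ = 1 := by simp only [Units.inv_eq_val_inv, IsUnit.mul_val_inv, mul_one, sub_add_cancel]
  · calc
      (1 + y * (IsUnit.unit h).inv * x) * (1 - y * x) =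
          1 - y * x + y * (h.unit.inv * (1 - x * y)) * x := by noncomm_ring
      _ = 1 := by simp only [Units.inv_eq_val_inv, IsUnit.val_inv_mul, mul_one, sub_add_cancel]

/-- Ward identity for the Θ-propagator `Θ̂ = (I - t·(M⁰)ᵀ·S)⁻¹`:
`∑_{a,b} Θ̂_{ab} M_{xb} conj(M_{yb}) = (Im M)_{xy}/η`, where
`M = (Λ - z - t·diag(S·diag M))⁻¹`, `M⁰_{ab} = |M_{ab}|²`, and
`(Im M)_{xy} = ((M - M^*)/(2i))_{xy}`. -/
theorem theta_ward_identity (N : ℕ)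
    (Λ M : Matrix (Fin N) (Fin N) ℂ) (hΛ : Λ.IsHermitian)
    (S : Matrix (Fin N) (Fin N) ℝ) (hS : S.IsSymm)
    (t E η : ℝ) (hη : 0 < η)
    (hUnit : IsUnit (Λ - ((E : ℂ) + (η : ℂ) * Complex.I) • 1 -
      (t : ℂ) • Matrix.diagonal (fun a => ∑ b, (S a b : ℂ) * M b b)))
    (hM : M = (Λ - ((E : ℂ) + (η : ℂ) * Complex.I) • 1 -
      (t : ℂ) • Matrix.diagonal (fun a => ∑ b, (S a b : ℂ) * M b b))⁻¹)
    (hΘ : IsUnit ((1 : Matrix (Fin N) (Fin N) ℝ)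
      - t • (Matrix.of fun p q => Complex.normSq (M p q))ᵀ * S)) :
    ∀ x y, ∑ a, ∑ b,
        (((((1 : Matrix (Fin N) (Fin N) ℝ)
            - t • (Matrix.of fun p q => Complex.normSq (M p q))ᵀ * S)⁻¹) a b : ℂ))
          * M x b * (starRingEnd ℂ) (M y b)
      = ((M x y - (starRingEnd ℂ) (M y x)) / (2 * Complex.I)) / (η : ℂ) := by
  -- Notation
  set z : ℂ := (E : ℂ) + (η : ℂ) * Complex.I with hz
  set f : Fin N → ℂ := fun a => ∑ b, (S a b : ℂ) * M b b with hf
  set A : Matrix (Fin N) (Fin N) ℂ :=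
    Λ - z • 1 - (t : ℂ) • Matrix.diagonal f with hA
  set M0 : Matrix (Fin N) (Fin N) ℝ :=
    Matrix.of fun p q => Complex.normSq (M p q) with hM0
  set B : Matrix (Fin N) (Fin N) ℝ :=
    (1 : Matrix (Fin N) (Fin N) ℝ) - t • M0ᵀ * S with hB
  set m : Fin N → ℝ := fun b => (M b b).im with hm
  set Sm : Fin N → ℝ := fun a => ∑ b, S a b * m b with hSm
  set c : Fin N → ℝ := fun b => ∑ a, B⁻¹ a b with hc
  have hdet : IsUnit A.det := (Matrix.isUnit_iff_isUnit_det A).mp hUnit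
  have hAM : A * M = 1 := by rw [hM]; exact Matrix.mul_nonsing_inv A hdet
  have hMA : M * A = 1 := by rw [hM]; exact Matrix.nonsing_inv_mul A hdet
  have hW : M - Mᴴ = M * (Aᴴ - A) * Mᴴ := by
    have h1 : Aᴴ * Mᴴ = 1 := by rw [← conjTranspose_mul, hMA, conjTranspose_one]
    calc M - Mᴴ = M * (Aᴴ * Mᴴ) - (M * A) * Mᴴ := by rw [h1, hMA, mul_one, one_mul]
      _ = M * (Aᴴ - A) * Mᴴ := by noncomm_ring
  have hΛ' : ∀ i j, (starRingEnd ℂ) (Λ j i) = Λ i j := by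
    intro i j
    conv_rhs => rw [← hΛ]
    simp [Matrix.conjTranspose_apply]
  have hsubconj : ∀ w : ℂ, w - (starRingEnd ℂ) w = 2 * w.im * Complex.I := by
    intro w
    exact_mod_cast Complex.sub_conj w
  have hdiag : Aᴴ - A
      = Matrix.diagonal (fun a => 2 * Complex.I * ((η + t * Sm a : ℝ) : ℂ)) := by
    ext i j
    rcases eq_or_ne i j with rfl | hij
    · simp only [Matrix.sub_apply, Matrix.conjTranspose_apply, hA, Matrix.diagonal_apply_eq,
        Matrix.one_apply_eq, Matrix.smul_apply, smul_eq_mul]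
      have hfi : f i - (starRingEnd ℂ) (f i) = 2 * Complex.I * ((Sm i : ℝ) : ℂ) := by
        have step : ∀ b ∈ Finset.univ,
            (S i b : ℂ) * M b b - (starRingEnd ℂ) ((S i b : ℂ) * M b b)
            = 2 * Complex.I * ((S i b * m b : ℝ) : ℂ) := by
          intro b _
          rw [_root_.map_mul, Complex.conj_ofReal, ← mul_sub, hsubconj]
          push_cast
          ring
        rw [hf]
        simp only [map_sum, ← Finset.sum_sub_distrib]
        rw [Finset.sum_congr rfl step, ← Finset.mul_sum]
        simp only [hSm]
        push_cast
        ring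
      have hzz : (starRingEnd ℂ) z = (E : ℂ) - (η : ℂ) * Complex.I := by
        rw [hz, map_add, _root_.map_mul, Complex.conj_ofReal, Complex.conj_ofReal,
          Complex.conj_I]
        ring
      have hstar : star (Λ i i - z * 1 - (t : ℂ) * f i)
          = Λ i i - (starRingEnd ℂ) z * 1 - (t : ℂ) * (starRingEnd ℂ) (f i) := by
        simp only [star_sub, star_mul', star_one, Complex.star_def, hΛ' i i,
          Complex.conj_ofReal, one_mul, mul_one]
      rw [hstar, hzz, hz]
      push_cast at hfi ⊢
      linear_combination (t : ℂ) * hfi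
    · simp [hA, Matrix.sub_apply, Matrix.conjTranspose_apply, Matrix.diagonal_apply_ne _ hij,
        Matrix.diagonal_apply_ne _ (Ne.symm hij), Matrix.one_apply_ne hij,
        Matrix.one_apply_ne (Ne.symm hij), hΛ']
  have key : ∀ p q, M p q - (starRingEnd ℂ) (M q p)
      = ∑ a, M p a * (2 * Complex.I * ((η + t * Sm a : ℝ) : ℂ)) * (starRingEnd ℂ) (M q a) := by
    intro p q
    have h1 := congrFun (congrFun hW p) q
    rw [hdiag] at h1
    simpa [Matrix.sub_apply, Matrix.mul_apply, Matrix.diagonal_apply,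
      Matrix.conjTranspose_apply, mul_ite, mul_zero, ite_mul, zero_mul,
      Finset.sum_ite_eq, Finset.sum_ite_eq'] using h1
  have hSsym : ∀ p q, S p q = S q p := by
    intro p q
    exact (congrFun (congrFun hS p) q).symm
  have fact1 : ∀ a, m a = η * (∑ j, M0 a j) + t * ∑ j, Sm j * M0 a j := by
    intro a
    have h1 := key a a
    have hterm : ∀ j ∈ Finset.univ,
        M a j * (2 * Complex.I * ((η + t * Sm j : ℝ) : ℂ)) * (starRingEnd ℂ) (M a j)
        = 2 * Complex.I * (((η + t * Sm j) * M0 a j : ℝ) : ℂ) := by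
      intro j _
      have hmc : M a j * (starRingEnd ℂ) (M a j) = ((M0 a j : ℝ) : ℂ) := by
        rw [hM0]; simp [Complex.mul_conj]
      calc M a j * (2 * Complex.I * ((η + t * Sm j : ℝ) : ℂ)) * (starRingEnd ℂ) (M a j)
          = ((η + t * Sm j : ℝ) : ℂ) * (M a j * (starRingEnd ℂ) (M a j)) * (2 * Complex.I) := by
            ring
        _ = 2 * Complex.I * (((η + t * Sm j) * M0 a j : ℝ) : ℂ) := by
            rw [hmc]; push_cast; ring
    rw [Finset.sum_congr rfl hterm, ← Finset.mul_sum, hsubconj] at h1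
    have h2 : ((m a : ℝ) : ℂ) = ((∑ j, (η + t * Sm j) * M0 a j : ℝ) : ℂ) := by
      have h2I : (2 : ℂ) * Complex.I ≠ 0 := by
        simp [Complex.I_ne_zero]
      apply mul_left_cancel₀ h2I
      push_cast at h1 ⊢
      rw [hm]
      linear_combination h1
    have h3 := Complex.ofReal_inj.mp h2
    rw [h3]
    have expand : ∀ j ∈ Finset.univ, (η + t * Sm j) * M0 a j
        = η * M0 a j + t * (Sm j * M0 a j) := by intro j _; ring
    rw [Finset.sum_congr rfl expand, Finset.sum_add_distrib, ← Finset.mul_sum,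
      ← Finset.mul_sum]
  have hBdet : IsUnit B.det := (Matrix.isUnit_iff_isUnit_det B).mp hΘ
  have hBinv : B⁻¹ * B = 1 := Matrix.nonsing_inv_mul B hBdet
  have factC : ∀ b, c b = 1 + t * ∑ j, S b j * (∑ k, M0 j k * c k) := by
    intro b
    have h1 : ∑ a, (B⁻¹ * B) a b = 1 := by
      rw [hBinv]
      simp [Matrix.one_apply]
    have hBapp : ∀ k, B k b = (if k = b then (1:ℝ) else 0) - t * ∑ j, M0 j k * S j b := by
      intro k
      rw [hB]
      simp only [Matrix.sub_apply, Matrix.one_apply, Matrix.mul_apply, Matrix.smul_apply,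
        Matrix.transpose_apply, smul_eq_mul, Finset.mul_sum]
      ring_nf
    have h2 : ∑ a, (B⁻¹ * B) a b
        = c b - t * ∑ j, S b j * (∑ k, M0 j k * c k) := by
      calc ∑ a, (B⁻¹ * B) a b = ∑ a, ∑ k, B⁻¹ a k * B k b := by
            simp [Matrix.mul_apply]
        _ = ∑ k, (∑ a, B⁻¹ a k) * B k b := by
            rw [Finset.sum_comm]
            simp [Finset.sum_mul]
        _ = ∑ k, c k * B k b := by rw [hc]
        _ = c b - t * ∑ j, S b j * (∑ k, M0 j k * c k) := ?_
      simp only [hBapp, mul_sub, Finset.sum_sub_distrib, mul_ite, mul_one, mul_zero,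
        Finset.sum_ite_eq']
      simp only [Finset.mem_univ, if_true]
      congr 1
      have step : ∀ k ∈ Finset.univ, c k * (t * ∑ j, M0 j k * S j b)
          = ∑ j, t * (S b j * (M0 j k * c k)) := by
        intro k _
        rw [Finset.mul_sum, Finset.mul_sum]
        refine Finset.sum_congr rfl fun j _ => ?_
        rw [hSsym b j]; ring
      rw [Finset.sum_congr rfl step, Finset.sum_comm, Finset.mul_sum]
      refine Finset.sum_congr rfl fun j _ => ?_
      rw [Finset.mul_sum, Finset.mul_sum]
    rw [h2] at h1
    linarith [h1]
  have hΘ' : IsUnit ((1 : Matrix (Fin N) (Fin N) ℝ) - (t • M0ᵀ) * S) := by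
    rw [← hB]; exact hΘ
  have hswap : IsUnit ((1 : Matrix (Fin N) (Fin N) ℝ) - S * (t • M0ᵀ)) :=
    isUnit_one_sub_swap hΘ'
  have htrans : ((1 : Matrix (Fin N) (Fin N) ℝ) - S * (t • M0ᵀ))ᵀ
      = (1 : Matrix (Fin N) (Fin N) ℝ) - t • M0 * S := by
    rw [Matrix.transpose_sub, Matrix.transpose_one, Matrix.transpose_mul,
      Matrix.transpose_smul, Matrix.transpose_transpose, hS]
  have hB' : IsUnit ((1 : Matrix (Fin N) (Fin N) ℝ) - t • M0 * S) := by
    rw [← htrans, Matrix.isUnit_iff_isUnit_det, Matrix.det_transpose,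
      ← Matrix.isUnit_iff_isUnit_det]
    exact hswap
  have hfact1' : m = η • (M0 *ᵥ (fun _ => (1:ℝ))) + t • ((M0 * S) *ᵥ m) := by
    funext a
    simp only [Pi.add_apply, Pi.smul_apply, smul_eq_mul, Matrix.mulVec, dotProduct,
      Matrix.mul_apply, mul_one]
    rw [fact1 a]
    have h1 : ∑ k, (∑ j, M0 a j * S j k) * m k = ∑ j, Sm j * M0 a j := by
      simp only [Finset.sum_mul]
      rw [Finset.sum_comm]
      refine Finset.sum_congr rfl fun j _ => ?_
      have h2 : Sm j * M0 a j = ∑ k, (M0 a j * S j k) * m k := by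
        simp only [hSm]
        rw [Finset.sum_mul]
        exact Finset.sum_congr rfl fun k _ => by ring
      rw [h2]
    rw [h1]
  have hfactC' : c - t • ((S * M0) *ᵥ c) = fun _ => (1:ℝ) := by
    funext b
    simp only [Pi.sub_apply, Pi.smul_apply, smul_eq_mul, Matrix.mulVec, dotProduct,
      Matrix.mul_apply]
    have h1 : ∑ j, (∑ k, S b k * M0 k j) * c j = ∑ j, S b j * (∑ k, M0 j k * c k) := by
      simp only [Finset.sum_mul]
      rw [Finset.sum_comm]
      refine Finset.sum_congr rfl fun j _ => ?_
      rw [Finset.mul_sum]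
      exact Finset.sum_congr rfl fun k _ => by ring
    rw [h1, factC b]
    ring
  have hBm : ((1 : Matrix (Fin N) (Fin N) ℝ) - t • M0 * S) *ᵥ m
      = η • (M0 *ᵥ (fun _ => (1:ℝ))) := by
    rw [Matrix.sub_mulVec, Matrix.one_mulVec, smul_mul_assoc, Matrix.smul_mulVec]
    nth_rewrite 1 [hfact1']
    abel
  have hBv : ((1 : Matrix (Fin N) (Fin N) ℝ) - t • M0 * S) *ᵥ (η • (M0 *ᵥ c))
      = η • (M0 *ᵥ (fun _ => (1:ℝ))) := by
    rw [Matrix.sub_mulVec, Matrix.one_mulVec, smul_mul_assoc, Matrix.smul_mulVec,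
      Matrix.mulVec_smul, Matrix.mulVec_mulVec, smul_comm t η, ← smul_sub]
    congr 1
    rw [mul_assoc, ← Matrix.mulVec_mulVec, ← Matrix.mulVec_smul, ← Matrix.mulVec_sub,
      hfactC']
  have hB'det : IsUnit ((1 : Matrix (Fin N) (Fin N) ℝ) - t • M0 * S).det :=
    (Matrix.isUnit_iff_isUnit_det _).mp hB'
  have hmv : m = η • (M0 *ᵥ c) := by
    have h := hBm.trans hBv.symm
    have e1 : ((1 : Matrix (Fin N) (Fin N) ℝ) - t • M0 * S)⁻¹ *ᵥ
        (((1 : Matrix (Fin N) (Fin N) ℝ) - t • M0 * S) *ᵥ m)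
        = ((1 : Matrix (Fin N) (Fin N) ℝ) - t • M0 * S)⁻¹ *ᵥ
        (((1 : Matrix (Fin N) (Fin N) ℝ) - t • M0 * S) *ᵥ (η • (M0 *ᵥ c))) := by rw [h]
    rwa [Matrix.mulVec_mulVec, Matrix.mulVec_mulVec, Matrix.nonsing_inv_mul _ hB'det,
      Matrix.one_mulVec, Matrix.one_mulVec] at e1
  have hmj : ∀ j, m j = η * ∑ k, M0 j k * c k := by
    intro j
    have h := congrFun hmv j
    simpa [Matrix.mulVec, dotProduct] using h
  have hcoef : ∀ b, η * c b = η + t * Sm b := by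
    intro b
    have h1 : Sm b = η * ∑ j, S b j * (∑ k, M0 j k * c k) := by
      simp only [hSm]
      rw [Finset.mul_sum]
      refine Finset.sum_congr rfl fun j _ => ?_
      rw [hmj j]; ring
    rw [factC b, h1]; ring
  have h2I : (2 : ℂ) * Complex.I ≠ 0 := by simp [Complex.I_ne_zero]
  have hηC : (η : ℂ) ≠ 0 := Complex.ofReal_ne_zero.mpr (ne_of_gt hη)
  intro x y
  rw [div_div, eq_div_iff (mul_ne_zero h2I hηC), key x y, Finset.sum_comm, Finset.sum_mul]
  refine Finset.sum_congr rfl fun b _ => ?_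
  have hsum : ∑ a, ((B⁻¹ a b : ℝ) : ℂ) * M x b * (starRingEnd ℂ) (M y b)
      = ((c b : ℝ) : ℂ) * (M x b * (starRingEnd ℂ) (M y b)) := by
    simp only [hc]
    push_cast
    rw [Finset.sum_mul]
    exact Finset.sum_congr rfl fun a _ => by ring
  rw [hsum]
  have hC : ((η : ℝ) : ℂ) * ((c b : ℝ) : ℂ)
      = ((η : ℝ) : ℂ) + ((t : ℝ) : ℂ) * ((Sm b : ℝ) : ℂ) := by
    exact_mod_cast congrArg Complex.ofReal (hcoef b)
  push_cast at hC ⊢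
  linear_combination (2 * Complex.I * (M x b * (starRingEnd ℂ) (M y b))) * hC
end
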